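/- The Levi-Civita connection of the type B metric on ℝ⁴ satisfies ∇_{∂₁}∂₁ = (1/3)(∂₁ - 2∂₂) + (μ/3)(2e^{x₁}∂₃ - e^{x₂}∂₄) and ∇_{∂₁}∂₂ = -(1/3)(∂₁ + ∂₂) + (μ/3)(e^{x₁}∂₃ + e^{x₂}∂₄), and moreover ∇_{∂₃}∂₃ = ∇_{∂₄}∂₄ = ∇_{∂₃}∂₄ = 0. -/
import Mathlib


open Real

noncomputable def pd {n : ℕ} (i : Fin n) (f : (Fin n → ℝ) → ℝ) (p : Fin n → ℝ) : ℝ :=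
  fderiv ℝ f p (Pi.single i 1)

noncomputable def gB (μ : ℝ) (p : Fin 4 → ℝ) : Matrix (Fin 4) (Fin 4) ℝ :=
  Matrix.of
    ![![μ, μ/2, exp (-p 0) / 2, exp (-p 1)],
      ![μ/2, μ, exp (-p 0), exp (-p 1) / 2],
      ![exp (-p 0) / 2, exp (-p 0), 0, 0],
      ![exp (-p 1), exp (-p 1) / 2, 0, 0]]

/-- Koszul characterization of the Christoffel symbols of the Levi-Civita
connection of the type B metric. -/
def IsChristoffelB (μ : ℝ) (Γ : Fin 4 → Fin 4 → Fin 4 → (Fin 4 → ℝ) → ℝ) : Prop :=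
  ∀ (i j k : Fin 4) (p : Fin 4 → ℝ),
    (∑ l, gB μ p l k * Γ l i j p) =
      (1/2) * (pd i (fun q => gB μ q j k) p + pd j (fun q => gB μ q i k) p
        - pd k (fun q => gB μ q i j) p)

lemma pd_const {n : ℕ} (i : Fin n) (c : ℝ) (p : Fin n → ℝ) : pd i (fun _ => c) p = 0 := by
  simp [pd]

lemma pd_exp_neg {n : ℕ} (i j : Fin n) (p : Fin n → ℝ) :
    pd i (fun q => Real.exp (-q j)) p = if i = j then -Real.exp (-p j) else 0 := by
  have h1 := (ContinuousLinearMap.proj (R := ℝ) (φ := fun _ : Fin n => ℝ) j).hasFDerivAt (x := p)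
  have h2 : HasFDerivAt (fun q : Fin n → ℝ => Real.exp (-q j))
      (Real.exp (-p j) • -(ContinuousLinearMap.proj j : (Fin n → ℝ) →L[ℝ] ℝ)) p := (h1.neg).exp
  rw [pd, h2.fderiv]
  by_cases h : i = j <;> simp [Pi.single_apply, h, eq_comm]

lemma pd_exp_neg_half {n : ℕ} (i j : Fin n) (p : Fin n → ℝ) :
    pd i (fun q => Real.exp (-q j) / 2) p = (if i = j then -Real.exp (-p j) else 0) / 2 := by
  have h1 := (ContinuousLinearMap.proj (R := ℝ) (φ := fun _ : Fin n => ℝ) j).hasFDerivAt (x := p)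
  have h2 : HasFDerivAt (fun q : Fin n → ℝ => Real.exp (-q j) / 2)
      ((2⁻¹:ℝ) • (Real.exp (-p j) • -(ContinuousLinearMap.proj j : (Fin n → ℝ) →L[ℝ] ℝ))) p :=
    ((h1.neg).exp).mul_const 2⁻¹
  rw [pd, h2.fderiv]
  by_cases h : i = j <;> simp [Pi.single_apply, h, eq_comm] <;> ring

/-- Solving the 4×4 linear system that appears in all the Koszul equations of the
type B metric. -/
lemma solveB {μ E F X Y a b c d r2 r3 : ℝ} (hX : X * E = 1) (hY : Y * F = 1)
    (e0 : μ*a + μ/2*b + E/2*c + F*d = 0)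
    (e1 : μ/2*a + μ*b + E*c + F/2*d = 0)
    (e2 : E/2*a + E*b = r2*E)
    (e3 : F*a + F/2*b = r3*F) :
    a = (4*r3 - 2*r2)/3 ∧ b = (4*r2 - 2*r3)/3 ∧
      c = -μ*((4*r2 - 2*r3)/3)*X ∧ d = -μ*((4*r3 - 2*r2)/3)*Y := by
  have hE : E ≠ 0 := right_ne_zero_of_mul_eq_one hX
  have hF : F ≠ 0 := right_ne_zero_of_mul_eq_one hY
  have h2 : a + 2*b = 2*r2 := by
    have h : E * (a + 2*b) = E * (2*r2) := by linear_combination 2*e2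
    exact mul_left_cancel₀ hE h
  have h3 : 2*a + b = 2*r3 := by
    have h : F * (2*a + b) = F * (2*r3) := by linear_combination 2*e3
    exact mul_left_cancel₀ hF h
  have ha : a = (4*r3 - 2*r2)/3 := by linarith
  have hb : b = (4*r2 - 2*r3)/3 := by linarith
  have hEc : E * c = -μ * b := by linear_combination (4/3)*e1 - (2/3)*e0
  have hFd : F * d = -μ * a := by linear_combination (4/3)*e0 - (2/3)*e1
  refine ⟨ha, hb, ?_, ?_⟩
  · linear_combination X*hEc - c*hX - μ*X*hb
  · linear_combination Y*hFd - d*hY - μ*Y*ha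

/-- ∇_{∂₁}∂₁ = (1/3)(∂₁-2∂₂) + (μ/3)(2e^{x₁}∂₃ - e^{x₂}∂₄),
∇_{∂₁}∂₂ = -(1/3)(∂₁+∂₂) + (μ/3)(e^{x₁}∂₃ + e^{x₂}∂₄), and
∇_{∂₃}∂₃ = ∇_{∂₄}∂₄ = ∇_{∂₃}∂₄ = 0 for the type B metric. -/
theorem connection_typeB (μ : ℝ) (Γ : Fin 4 → Fin 4 → Fin 4 → (Fin 4 → ℝ) → ℝ)
    (hΓ : IsChristoffelB μ Γ) :
    ∀ p : Fin 4 → ℝ,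
      (fun k => Γ k 0 0 p) =
        ![1/3, -2/3, (μ/3) * (2 * exp (p 0)), (μ/3) * (-exp (p 1))] ∧
      (fun k => Γ k 0 1 p) =
        ![-1/3, -1/3, (μ/3) * exp (p 0), (μ/3) * exp (p 1)] ∧
      (∀ k : Fin 4, Γ k 2 2 p = 0 ∧ Γ k 3 3 p = 0 ∧ Γ k 2 3 p = 0) := by
  intro p
  have hX : Real.exp (p 0) * Real.exp (-p 0) = 1 := by
    rw [← Real.exp_add]; simp
  have hY : Real.exp (p 1) * Real.exp (-p 1) = 1 := by
    rw [← Real.exp_add]; simp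
  -- case (0,0)
  have h00 : Γ 0 0 0 p = (4*(0:ℝ) - 2*(-1/2))/3 ∧ Γ 1 0 0 p = (4*(-1/2:ℝ) - 2*0)/3 ∧
      Γ 2 0 0 p = -μ*((4*(-1/2:ℝ) - 2*0)/3)*Real.exp (p 0) ∧
      Γ 3 0 0 p = -μ*((4*(0:ℝ) - 2*(-1/2))/3)*Real.exp (p 1) := by
    have e0 := hΓ 0 0 0 p
    have e1 := hΓ 0 0 1 p
    have e2 := hΓ 0 0 2 p
    have e3 := hΓ 0 0 3 p
    simp [gB, Fin.sum_univ_four, pd_const, pd_exp_neg, pd_exp_neg_half,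
      Matrix.vecHead, Matrix.vecTail] at e0 e1 e2 e3
    exact solveB hX hY (by linear_combination e0) (by linear_combination e1)
      (by linear_combination e2) (by linear_combination e3)
  -- case (0,1)
  have h01 : Γ 0 0 1 p = (4*(-1/2:ℝ) - 2*(-1/2))/3 ∧ Γ 1 0 1 p = (4*(-1/2:ℝ) - 2*(-1/2))/3 ∧
      Γ 2 0 1 p = -μ*((4*(-1/2:ℝ) - 2*(-1/2))/3)*Real.exp (p 0) ∧
      Γ 3 0 1 p = -μ*((4*(-1/2:ℝ) - 2*(-1/2))/3)*Real.exp (p 1) := by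
    have e0 := hΓ 0 1 0 p
    have e1 := hΓ 0 1 1 p
    have e2 := hΓ 0 1 2 p
    have e3 := hΓ 0 1 3 p
    simp [gB, Fin.sum_univ_four, pd_const, pd_exp_neg, pd_exp_neg_half,
      Matrix.vecHead, Matrix.vecTail] at e0 e1 e2 e3
    exact solveB hX hY (by linear_combination e0) (by linear_combination e1)
      (by linear_combination e2) (by linear_combination e3)
  have h22 : Γ 0 2 2 p = (4*(0:ℝ) - 2*0)/3 ∧ Γ 1 2 2 p = (4*(0:ℝ) - 2*0)/3 ∧
      Γ 2 2 2 p = -μ*((4*(0:ℝ) - 2*0)/3)*Real.exp (p 0) ∧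
      Γ 3 2 2 p = -μ*((4*(0:ℝ) - 2*0)/3)*Real.exp (p 1) := by
    have e0 := hΓ 2 2 0 p
    have e1 := hΓ 2 2 1 p
    have e2 := hΓ 2 2 2 p
    have e3 := hΓ 2 2 3 p
    simp [gB, Fin.sum_univ_four, pd_const, pd_exp_neg, pd_exp_neg_half,
      Matrix.vecHead, Matrix.vecTail] at e0 e1 e2 e3
    exact solveB hX hY (by linear_combination e0) (by linear_combination e1)
      (by linear_combination e2) (by linear_combination e3)
  have h33 : Γ 0 3 3 p = (4*(0:ℝ) - 2*0)/3 ∧ Γ 1 3 3 p = (4*(0:ℝ) - 2*0)/3 ∧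
      Γ 2 3 3 p = -μ*((4*(0:ℝ) - 2*0)/3)*Real.exp (p 0) ∧
      Γ 3 3 3 p = -μ*((4*(0:ℝ) - 2*0)/3)*Real.exp (p 1) := by
    have e0 := hΓ 3 3 0 p
    have e1 := hΓ 3 3 1 p
    have e2 := hΓ 3 3 2 p
    have e3 := hΓ 3 3 3 p
    simp [gB, Fin.sum_univ_four, pd_const, pd_exp_neg, pd_exp_neg_half,
      Matrix.vecHead, Matrix.vecTail] at e0 e1 e2 e3
    exact solveB hX hY (by linear_combination e0) (by linear_combination e1)
      (by linear_combination e2) (by linear_combination e3)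
  have h23 : Γ 0 2 3 p = (4*(0:ℝ) - 2*0)/3 ∧ Γ 1 2 3 p = (4*(0:ℝ) - 2*0)/3 ∧
      Γ 2 2 3 p = -μ*((4*(0:ℝ) - 2*0)/3)*Real.exp (p 0) ∧
      Γ 3 2 3 p = -μ*((4*(0:ℝ) - 2*0)/3)*Real.exp (p 1) := by
    have e0 := hΓ 2 3 0 p
    have e1 := hΓ 2 3 1 p
    have e2 := hΓ 2 3 2 p
    have e3 := hΓ 2 3 3 p
    simp [gB, Fin.sum_univ_four, pd_const, pd_exp_neg, pd_exp_neg_half,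
      Matrix.vecHead, Matrix.vecTail] at e0 e1 e2 e3
    exact solveB hX hY (by linear_combination e0) (by linear_combination e1)
      (by linear_combination e2) (by linear_combination e3)
  obtain ⟨a0, b0, c0, d0⟩ := h00
  obtain ⟨a1, b1, c1, d1⟩ := h01
  obtain ⟨a2, b2, c2, d2⟩ := h22
  obtain ⟨a3, b3, c3, d3⟩ := h33
  obtain ⟨a4, b4, c4, d4⟩ := h23
  refine ⟨?_, ?_, ?_⟩
  · funext k
    fin_cases k <;> simp <;> [linear_combination a0; linear_combination b0;
      linear_combination c0; linear_combination d0]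
  · funext k
    fin_cases k <;> simp <;> [linear_combination a1; linear_combination b1;
      linear_combination c1; linear_combination d1]
  · intro k
    fin_cases k
    · exact show Γ 0 2 2 p = 0 ∧ Γ 0 3 3 p = 0 ∧ Γ 0 2 3 p = 0 from
        ⟨by linear_combination a2, by linear_combination a3, by linear_combination a4⟩
    · exact show Γ 1 2 2 p = 0 ∧ Γ 1 3 3 p = 0 ∧ Γ 1 2 3 p = 0 from
        ⟨by linear_combination b2, by linear_combination b3, by linear_combination b4⟩
    · exact show Γ 2 2 2 p = 0 ∧ Γ 2 3 3 p = 0 ∧ Γ 2 2 3 p = 0 from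
        ⟨by linear_combination c2, by linear_combination c3, by linear_combination c4⟩
    · exact show Γ 3 2 2 p = 0 ∧ Γ 3 3 3 p = 0 ∧ Γ 3 2 3 p = 0 from
        ⟨by linear_combination d2, by linear_combination d3, by linear_combination d4⟩
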